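/- arXiv:1003.1997 — 2 statements merged into one kernel-verified Lean document; each statement's English description precedes it below -/
import Mathlib

section
/- Let p be a prime, g a primitive root modulo p, and a an integer with gcd(a,p)=1. If v is an integer with g^v ≡ a (mod p) and x is any positive integer with x ≡ p·v − (p−1)·g (mod p(p−1)), then x^x ≡ a (mod p). In particular, without the restriction 1 ≤ x ≤ p−1, the congruence x^x ≡ a (mod p) always has solutions. -/
/-! For `x ≡ p v - (p - 1) g (mod p (p - 1))` we get `x ≡ g (mod p)` and `x ≡ v (mod p - 1)`.
Hence in `ZMod p` the base of `x ^ x` may be replaced by `g`, and since `g ^ (p - 1) = 1` the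
exponent may be replaced by `v`, giving `x ^ x = g ^ x = g ^ v = a`. -/

namespace Int

theorem mul_sub_sub_one_mul_modEq_self (m v g : ℤ) : m * v - (m - 1) * g ≡ g [ZMOD m] :=
  Int.modEq_iff_dvd.mpr ⟨g - v, by ring⟩

theorem mul_sub_sub_one_mul_modEq_sub_one (m v g : ℤ) : m * v - (m - 1) * g ≡ v [ZMOD m - 1] :=
  Int.modEq_iff_dvd.mpr ⟨g - v, by ring⟩

end Int

theorem exists_solution_without_range_restriction_general
    (p : ℕ) (hp : p.Prime) (g v : ℕ) (a : ℤ)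
    (hg : IsPrimitiveRoot (g : ZMod p) (p - 1))
    (hv : (g : ℤ) ^ v ≡ a [ZMOD (p : ℕ)])
    (x : ℕ)
    (hxc : (x : ℤ) ≡ (p : ℤ) * v - ((p : ℤ) - 1) * g [ZMOD (p * (p - 1) : ℕ)]) :
    (x : ℤ) ^ x ≡ a [ZMOD (p : ℕ)] := by
  have hpred : ((p - 1 : ℕ) : ℤ) = p - 1 := by push_cast [Nat.cast_sub hp.one_le]; rfl
  have hxg : (x : ℤ) ≡ g [ZMOD p] :=
    (hxc.of_dvd (by simp)).trans (Int.mul_sub_sub_one_mul_modEq_self _ _ _)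
  have hxv : x ≡ v [MOD p - 1] := by
    refine Int.natCast_modEq_iff.mp ((hxc.of_dvd (by simp)).trans ?_)
    rw [hpred]
    exact Int.mul_sub_sub_one_mul_modEq_sub_one _ _ _
  rw [← ZMod.intCast_eq_intCast_iff] at hxg hv ⊢
  push_cast at hxg hv ⊢
  rw [hxg, pow_eq_pow_of_modEq hxv hg.pow_eq_one, hv]

theorem exists_solution_without_range_restriction
    (p : ℕ) (hp : p.Prime) (g v : ℕ) (a : ℤ)
    (hg : IsPrimitiveRoot (g : ZMod p) (p - 1))
    (ha : IsCoprime a (p : ℤ))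
    (hv : (g : ℤ) ^ v ≡ a [ZMOD (p : ℕ)])
    (x : ℕ) (hx : 0 < x)
    (hxc : (x : ℤ) ≡ (p : ℤ) * v - ((p : ℤ) - 1) * g [ZMOD (p * (p - 1) : ℕ)]) :
    (x : ℤ) ^ x ≡ a [ZMOD (p : ℕ)] :=
  exists_solution_without_range_restriction_general p hp g v a hg hv x hxc
end

section
/- Let p be a prime, d and D positive integers with D = (p−1)/d, and let Y ⊆ {1, ..., D}. For b ∈ Z/pZ define s(b) = #{(y1, y2) ∈ Y × Y : y1·y2 ≡ b (mod p)}. Then for every b, s(b) ≤ (⌊p/d²⌋ + 1) · max_{1 ≤ z ≤ D²} τ(z), where τ denotes the number of divisors function. -/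
/-!
Each product `y₁ * y₂` with `y₁, y₂ ∈ [1, D]` lies in `[1, D²]`, and a value `z` is hit by at most
`τ(z)` ordered pairs. The products `≡ b (mod p)` in `[1, D²]` are determined by their quotient by
`p`, so there are at most `D² / p + 1` of them, and `D² / p ≤ p / d²` because `d * D < p`.
-/

open Finset

namespace Nat

theorem card_le_div_add_one_of_modEq {s : Finset ℕ} {n N : ℕ} (hle : ∀ z ∈ s, z ≤ N)
    (hmod : ∀ x ∈ s, ∀ y ∈ s, x ≡ y [MOD n]) : #s ≤ N / n + 1 := by
  have hmaps : ∀ z ∈ s, z / n ∈ range (N / n + 1) := fun z hz =>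
    mem_range_succ_iff.2 (Nat.div_le_div_right (hle z hz))
  have hinj : Set.InjOn (· / n) s := fun x hx y hy hxy => by
    rw [← Nat.div_add_mod x n, ← Nat.div_add_mod y n]
    exact congrArg₂ _ (congrArg _ hxy) (hmod x hx y hy)
  simpa using card_le_card_of_injOn _ hmaps hinj

theorem card_divisorsAntidiagonal (n : ℕ) : #n.divisorsAntidiagonal = #n.divisors := by
  rw [← map_div_right_divisors, card_map]

theorem sq_div_div_le_div_sq (p d : ℕ) : ((p - 1) / d) ^ 2 / p ≤ p / d ^ 2 := by
  rcases Nat.eq_zero_or_pos d with rfl | hd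
  · simp
  rcases Nat.eq_zero_or_pos p with rfl | hp
  · simp
  set D := (p - 1) / d
  have hdD : d * D < p := (Nat.mul_div_le (p - 1) d).trans_lt (by omega)
  rw [Nat.le_div_iff_mul_le (by positivity)]
  have : D ^ 2 / p * d ^ 2 * p < p * p := calc
    D ^ 2 / p * d ^ 2 * p = D ^ 2 / p * p * d ^ 2 := by ring
    _ ≤ D ^ 2 * d ^ 2 := Nat.mul_le_mul_right _ (Nat.div_mul_le_self _ _)
    _ = (d * D) ^ 2 := by ring
    _ < p * p := sq (d * D) ▸ Nat.mul_self_lt_mul_self hdD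
  exact (Nat.lt_of_mul_lt_mul_right this).le

end Nat

theorem mul_mem_Icc_one_sq {D : ℕ} {y : ℕ × ℕ} (hy : y ∈ Icc 1 D ×ˢ Icc 1 D) :
    y.1 * y.2 ∈ Icc 1 (D ^ 2) := by
  simp only [mem_product, mem_Icc] at hy ⊢
  exact ⟨Nat.one_le_iff_ne_zero.2 (Nat.mul_ne_zero (by omega) (by omega)),
    sq D ▸ Nat.mul_le_mul hy.1.2 hy.2.2⟩

theorem card_le_card_image_mul_mul_sup_card_divisors {s : Finset (ℕ × ℕ)} {D : ℕ}
    (hs : s ⊆ Icc 1 D ×ˢ Icc 1 D) :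
    #s ≤ #(s.image fun y => y.1 * y.2) * (Icc 1 (D ^ 2)).sup fun z => #z.divisors := by
  rw [mul_comm]
  refine card_le_mul_card_image s _ fun z hz => ?_
  obtain ⟨y, hy, rfl⟩ := mem_image.1 hz
  have hz := mul_mem_Icc_one_sq (hs hy)
  have hfiber : {x ∈ s | x.1 * x.2 = y.1 * y.2} ⊆ (y.1 * y.2).divisorsAntidiagonal :=
    fun x hx => Nat.mem_divisorsAntidiagonal.2
      ⟨(mem_filter.1 hx).2, by have := (mem_Icc.1 hz).1; omega⟩
  calc #{x ∈ s | x.1 * x.2 = y.1 * y.2}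
      ≤ #(y.1 * y.2).divisors := Nat.card_divisorsAntidiagonal _ ▸ card_le_card hfiber
    _ ≤ _ := le_sup (f := fun z => #z.divisors) hz

theorem s_b_bound_general
    (p : ℕ) (d D : ℕ)
    (hD : D = (p - 1) / d)
    (Y : Finset ℕ) (hY : Y ⊆ Finset.Icc 1 D)
    (s : ZMod p → ℕ)
    (hs : ∀ b, s b = ((Y ×ˢ Y).filter (fun yz => ((yz.1 * yz.2 : ℕ) : ZMod p) = b)).card)
    (b : ZMod p) :
    s b ≤ (p / d ^ 2 + 1) * (Finset.Icc 1 (D ^ 2)).sup (fun z => z.divisors.card) := by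
  set S := (Y ×ˢ Y).filter fun yz => ((yz.1 * yz.2 : ℕ) : ZMod p) = b
  have hS : S ⊆ Icc 1 D ×ˢ Icc 1 D := (filter_subset _ _).trans (product_subset_product hY hY)
  have hproducts : #(S.image fun y => y.1 * y.2) ≤ D ^ 2 / p + 1 := by
    refine Nat.card_le_div_add_one_of_modEq (fun z hz => ?_) fun x hx z hz => ?_
    · obtain ⟨y, hy, rfl⟩ := mem_image.1 hz
      exact (mem_Icc.1 (mul_mem_Icc_one_sq (hS hy))).2
    · obtain ⟨y, hy, rfl⟩ := mem_image.1 hx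
      obtain ⟨y', hy', rfl⟩ := mem_image.1 hz
      rw [← ZMod.natCast_eq_natCast_iff, (mem_filter.1 hy).2, (mem_filter.1 hy').2]
  rw [hs]
  calc #S ≤ #(S.image fun y => y.1 * y.2) * _ := card_le_card_image_mul_mul_sup_card_divisors hS
    _ ≤ _ := Nat.mul_le_mul_right _ <|
      hproducts.trans (Nat.add_le_add_right (hD ▸ Nat.sq_div_div_le_div_sq p d) 1)

theorem s_b_bound
    (p : ℕ) (hp : p.Prime) (d D : ℕ) (hd : 0 < d) (hDpos : 0 < D)
    (hD : D = (p - 1) / d)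
    (Y : Finset ℕ) (hY : Y ⊆ Finset.Icc 1 D)
    (s : ZMod p → ℕ)
    (hs : ∀ b, s b = ((Y ×ˢ Y).filter (fun yz => ((yz.1 * yz.2 : ℕ) : ZMod p) = b)).card)
    (b : ZMod p) :
    s b ≤ (p / d ^ 2 + 1) * (Finset.Icc 1 (D ^ 2)).sup (fun z => z.divisors.card) :=
  s_b_bound_general p d D hD Y hY s hs b
end
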